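/- Let η, ψ : Ω → ℂ be holomorphic functions on an open set Ω ⊆ ℂ with η nonvanishing. Define u by e^{u/2} = η·η̄·(1 + ψψ̄) (i.e., u = 2 log(|η|²(1+|ψ|²))) and Q = −η²·ψ_{,z}. Then u and Q satisfy the Gauss–Mainardi–Codazzi system u_{,zz̄} − 2|Q|²e^{−u} = 0 and Q_{,z̄} = 0. -/

import Mathlib

open Complex

noncomputable section

/-- Wirtinger derivative `∂_z f = (f_x − i f_y)/2` of `f : ℂ → ℂ`. -/
def wdz (f : ℂ → ℂ) (z : ℂ) : ℂ :=
  (2 : ℂ)⁻¹ * (fderiv ℝ f z 1 - I * fderiv ℝ f z I)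

/-- Wirtinger derivative `∂_z̄ f = (f_x + i f_y)/2` of `f : ℂ → ℂ`. -/
def wdzbar (f : ℂ → ℂ) (z : ℂ) : ℂ :=
  (2 : ℂ)⁻¹ * (fderiv ℝ f z 1 + I * fderiv ℝ f z I)

/-!
Near each point of `Ω`, `u = 2 log |η|² + 2 log (1 + |ψ|²)`. The first summand is
pluriharmonic: `∂_z̄ log |η|² = conj (η'/η)` is antiholomorphic, so `∂_z` kills it. For the
second, `∂_z̄ log (1 + |ψ|²) = ψ conj ψ' / (1 + |ψ|²)`, and one more `∂_z` gives
`|ψ'|² / (1 + |ψ|²)²`, which is `|Q|² e^{-u} = |η|⁴ |ψ'|² / (|η|⁴ (1 + |ψ|²)²)`.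
-/

open Filter Topology ComplexConjugate

section Wirtinger

variable {f g : ℂ → ℂ} {z : ℂ}

lemma Filter.EventuallyEq.wdz (h : f =ᶠ[𝓝 z] g) : _root_.wdz f =ᶠ[𝓝 z] _root_.wdz g := by
  filter_upwards [h.eventuallyEq_nhds] with w hw
  simp only [_root_.wdz, hw.fderiv_eq]

lemma Filter.EventuallyEq.wdzbar (h : f =ᶠ[𝓝 z] g) :
    _root_.wdzbar f =ᶠ[𝓝 z] _root_.wdzbar g := by
  filter_upwards [h.eventuallyEq_nhds] with w hw
  simp only [_root_.wdzbar, hw.fderiv_eq]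

lemma wdz_add (hf : DifferentiableAt ℝ f z) (hg : DifferentiableAt ℝ g z) :
    wdz (fun w => f w + g w) z = wdz f z + wdz g z := by
  simp only [wdz, fderiv_fun_add hf hg, add_apply]; ring

lemma wdzbar_add (hf : DifferentiableAt ℝ f z) (hg : DifferentiableAt ℝ g z) :
    wdzbar (fun w => f w + g w) z = wdzbar f z + wdzbar g z := by
  simp only [wdzbar, fderiv_fun_add hf hg, add_apply]; ring

lemma wdz_mul (hf : DifferentiableAt ℝ f z) (hg : DifferentiableAt ℝ g z) :
    wdz (fun w => f w * g w) z = wdz f z * g z + f z * wdz g z := by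
  simp only [wdz, fderiv_fun_mul hf hg, add_apply, smul_apply, smul_eq_mul]; ring

lemma wdzbar_mul (hf : DifferentiableAt ℝ f z) (hg : DifferentiableAt ℝ g z) :
    wdzbar (fun w => f w * g w) z = wdzbar f z * g z + f z * wdzbar g z := by
  simp only [wdzbar, fderiv_fun_mul hf hg, add_apply, smul_apply, smul_eq_mul]; ring

lemma wdz_const_mul (c : ℂ) (hf : DifferentiableAt ℝ f z) :
    wdz (fun w => c * f w) z = c * wdz f z := by
  simp only [wdz, fderiv_const_mul hf, smul_apply, smul_eq_mul]; ring

lemma wdzbar_const_mul (c : ℂ) (hf : DifferentiableAt ℝ f z) :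
    wdzbar (fun w => c * f w) z = c * wdzbar f z := by
  simp only [wdzbar, fderiv_const_mul hf, smul_apply, smul_eq_mul]; ring

lemma DifferentiableAt.fderiv_real_apply (hf : DifferentiableAt ℂ f z) (v : ℂ) :
    fderiv ℝ f z v = deriv f z * v := by
  rw [(hf.hasDerivAt.hasFDerivAt.restrictScalars ℝ).fderiv]
  simp [mul_comm]

lemma DifferentiableAt.wdz_eq_deriv (hf : DifferentiableAt ℂ f z) : wdz f z = deriv f z := by
  simp only [wdz, hf.fderiv_real_apply]
  linear_combination -(deriv f z / 2) * I_sq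

lemma DifferentiableAt.wdzbar_eq_zero (hf : DifferentiableAt ℂ f z) : wdzbar f z = 0 := by
  simp only [wdzbar, hf.fderiv_real_apply]
  linear_combination deriv f z / 2 * I_sq

lemma fderiv_conj_apply (v : ℂ) :
    fderiv ℝ (fun w => conj (f w)) z v = conj (fderiv ℝ f z v) := by
  rw [show (fun w => conj (f w)) = conjCLE ∘ f from rfl, conjCLE.comp_fderiv]
  rfl

lemma wdz_conj : wdz (fun w => conj (f w)) z = conj (wdzbar f z) := by
  simp only [wdz, wdzbar, fderiv_conj_apply, map_mul, map_add, map_inv₀, map_ofNat, conj_I]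
  ring

lemma wdzbar_conj : wdzbar (fun w => conj (f w)) z = conj (wdz f z) := by
  simp only [wdz, wdzbar, fderiv_conj_apply, map_mul, map_sub, map_inv₀, map_ofNat, conj_I]
  ring

lemma fderiv_ofReal_comp_apply {φ : ℝ → ℝ} {F : ℂ → ℝ} (hφ : DifferentiableAt ℝ φ (F z))
    (hF : DifferentiableAt ℝ F z) (v : ℂ) :
    fderiv ℝ (fun w => (φ (F w) : ℂ)) z v =
      deriv φ (F z) * fderiv ℝ (fun w => (F w : ℂ)) z v := by
  have hφF := ofRealCLM.hasFDerivAt.comp z (hφ.hasDerivAt.comp_hasFDerivAt z hF.hasFDerivAt)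
  have hF' := ofRealCLM.hasFDerivAt.comp z hF.hasFDerivAt
  rw [show (fun w => (φ (F w) : ℂ)) = ofRealCLM ∘ φ ∘ F from rfl, hφF.fderiv,
    show (fun w => (F w : ℂ)) = ofRealCLM ∘ F from rfl, hF'.fderiv]
  simp

lemma wdz_ofReal_comp {φ : ℝ → ℝ} {F : ℂ → ℝ} (hφ : DifferentiableAt ℝ φ (F z))
    (hF : DifferentiableAt ℝ F z) :
    wdz (fun w => (φ (F w) : ℂ)) z = deriv φ (F z) * wdz (fun w => (F w : ℂ)) z := by
  simp only [wdz, fderiv_ofReal_comp_apply hφ hF]; ring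

lemma wdzbar_ofReal_comp {φ : ℝ → ℝ} {F : ℂ → ℝ} (hφ : DifferentiableAt ℝ φ (F z))
    (hF : DifferentiableAt ℝ F z) :
    wdzbar (fun w => (φ (F w) : ℂ)) z = deriv φ (F z) * wdzbar (fun w => (F w : ℂ)) z := by
  simp only [wdzbar, fderiv_ofReal_comp_apply hφ hF]; ring

lemma DifferentiableAt.wdz_sq_norm (hf : DifferentiableAt ℂ f z) :
    wdz (fun w => ((‖f w‖ ^ 2 : ℝ) : ℂ)) z = deriv f z * conj (f z) := by
  simp only [ofReal_pow, ← mul_conj']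
  rw [wdz_mul (g := fun w => conj (f w)) (hf.restrictScalars ℝ) (hf.restrictScalars ℝ).star,
    hf.wdz_eq_deriv, wdz_conj, hf.wdzbar_eq_zero, map_zero, mul_zero, add_zero]

lemma DifferentiableAt.wdzbar_sq_norm (hf : DifferentiableAt ℂ f z) :
    wdzbar (fun w => ((‖f w‖ ^ 2 : ℝ) : ℂ)) z = f z * conj (deriv f z) := by
  simp only [ofReal_pow, ← mul_conj']
  rw [wdzbar_mul (g := fun w => conj (f w)) (hf.restrictScalars ℝ) (hf.restrictScalars ℝ).star,
    hf.wdzbar_eq_zero, wdzbar_conj, hf.wdz_eq_deriv, zero_mul, zero_add]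

lemma ContDiffAt.differentiableAt_wdzbar (hf : ContDiffAt ℝ 2 f z) :
    DifferentiableAt ℝ (wdzbar f) z := by
  have := (hf.fderiv_right (m := 1) (by norm_num)).differentiableAt one_ne_zero
  unfold wdzbar
  fun_prop

lemma wdz_wdzbar_add (hf : ContDiffAt ℝ 2 f z) (hg : ContDiffAt ℝ 2 g z) :
    wdz (wdzbar (fun w => f w + g w)) z = wdz (wdzbar f) z + wdz (wdzbar g) z := by
  have hsum : wdzbar (fun w => f w + g w) =ᶠ[𝓝 z] fun w => wdzbar f w + wdzbar g w := by
    filter_upwards [hf.eventually (by simp), hg.eventually (by simp)] with w hfw hgw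
    exact wdzbar_add (hfw.differentiableAt two_ne_zero) (hgw.differentiableAt two_ne_zero)
  rw [hsum.wdz.eq_of_nhds, wdz_add hf.differentiableAt_wdzbar hg.differentiableAt_wdzbar]

lemma wdz_wdzbar_const_mul (c : ℂ) (hf : ContDiffAt ℝ 2 f z) :
    wdz (wdzbar (fun w => c * f w)) z = c * wdz (wdzbar f) z := by
  have hmul : wdzbar (fun w => c * f w) =ᶠ[𝓝 z] fun w => c * wdzbar f w := by
    filter_upwards [hf.eventually (by simp)] with w hfw
    exact wdzbar_const_mul c (hfw.differentiableAt two_ne_zero)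
  rw [hmul.wdz.eq_of_nhds, wdz_const_mul c hf.differentiableAt_wdzbar]

end Wirtinger

section LogPotentials

variable {f : ℂ → ℂ} {z : ℂ}

lemma ContDiffAt.ofReal_log {n : WithTop ℕ∞} {F : ℂ → ℝ} (hF : ContDiffAt ℝ n F z)
    (h0 : F z ≠ 0) : ContDiffAt ℝ n (fun w => (Real.log (F w) : ℂ)) z :=
  ofRealCLM.contDiff.contDiffAt.comp z (hF.log h0)

lemma DifferentiableAt.wdzbar_log_sq_norm (hf : DifferentiableAt ℂ f z) (h0 : f z ≠ 0) :
    wdzbar (fun w => (Real.log (‖f w‖ ^ 2) : ℂ)) z = conj (deriv f z / f z) := by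
  rw [wdzbar_ofReal_comp (φ := Real.log) (Real.differentiableAt_log (by positivity))
    ((hf.restrictScalars ℝ).norm_sq ℝ), hf.wdzbar_sq_norm, Real.deriv_log, ofReal_inv,
    ofReal_pow, ← mul_conj', map_div₀]
  have : conj (f z) ≠ 0 := (map_ne_zero _).mpr h0
  field_simp

lemma AnalyticAt.wdz_wdzbar_log_sq_norm (hf : AnalyticAt ℂ f z) (h0 : f z ≠ 0) :
    wdz (wdzbar (fun w => (Real.log (‖f w‖ ^ 2) : ℂ))) z = 0 := by
  have hlog : wdzbar (fun w => (Real.log (‖f w‖ ^ 2) : ℂ)) =ᶠ[𝓝 z]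
      fun w => conj (deriv f w / f w) := by
    filter_upwards [hf.eventually_analyticAt, hf.continuousAt.eventually_ne h0] with w hfw h0w
    exact hfw.differentiableAt.wdzbar_log_sq_norm h0w
  rw [hlog.wdz.eq_of_nhds, wdz_conj,
    (hf.deriv.differentiableAt.fun_div hf.differentiableAt h0).wdzbar_eq_zero, map_zero]

lemma hasDerivAt_log_one_add {x : ℝ} (hx : 1 + x ≠ 0) :
    HasDerivAt (fun t => Real.log (1 + t)) (1 + x)⁻¹ x := by
  simpa using ((hasDerivAt_id x).const_add 1).log hx

lemma DifferentiableAt.wdzbar_log_one_add_sq_norm (hf : DifferentiableAt ℂ f z) :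
    wdzbar (fun w => (Real.log (1 + ‖f w‖ ^ 2) : ℂ)) z =
      f z * conj (deriv f z) * ((1 + ‖f z‖ ^ 2)⁻¹ : ℝ) := by
  have hlog := hasDerivAt_log_one_add (x := ‖f z‖ ^ 2) (by positivity)
  rw [wdzbar_ofReal_comp (φ := fun t => Real.log (1 + t)) hlog.differentiableAt
    ((hf.restrictScalars ℝ).norm_sq ℝ), hlog.deriv, hf.wdzbar_sq_norm, mul_comm]

lemma AnalyticAt.wdz_wdzbar_log_one_add_sq_norm (hf : AnalyticAt ℂ f z) :
    wdz (wdzbar (fun w => (Real.log (1 + ‖f w‖ ^ 2) : ℂ))) z =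
      ((‖deriv f z‖ ^ 2 / (1 + ‖f z‖ ^ 2) ^ 2 : ℝ) : ℂ) := by
  have hlog : wdzbar (fun w => (Real.log (1 + ‖f w‖ ^ 2) : ℂ)) =ᶠ[𝓝 z]
      fun w => f w * conj (deriv f w) * ((1 + ‖f w‖ ^ 2)⁻¹ : ℝ) := by
    filter_upwards [hf.eventually_analyticAt] with w hfw
    exact hfw.differentiableAt.wdzbar_log_one_add_sq_norm
  have hinv : HasDerivAt (fun t : ℝ => (1 + t)⁻¹) (-1 / (1 + ‖f z‖ ^ 2) ^ 2) (‖f z‖ ^ 2) := by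
    have : (1 : ℝ) + ‖f z‖ ^ 2 ≠ 0 := by positivity
    simpa using ((hasDerivAt_id (‖f z‖ ^ 2)).const_add 1).fun_inv this
  have hfR := hf.differentiableAt.restrictScalars ℝ
  have hf'R := hf.deriv.differentiableAt.restrictScalars ℝ
  have hc : DifferentiableAt ℝ (fun w => conj (deriv f w)) z := hf'R.star
  have hr : DifferentiableAt ℝ (fun w => (((1 + ‖f w‖ ^ 2)⁻¹ : ℝ) : ℂ)) z :=
    ofRealCLM.differentiableAt.comp z
      (DifferentiableAt.comp (g := fun t : ℝ => (1 + t)⁻¹) z hinv.differentiableAt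
        (hfR.norm_sq ℝ))
  rw [hlog.wdz.eq_of_nhds, wdz_mul (hfR.fun_mul hc) hr, wdz_mul hfR hc,
    wdz_ofReal_comp (φ := fun t => (1 + t)⁻¹) hinv.differentiableAt (hfR.norm_sq ℝ), hinv.deriv,
    hf.differentiableAt.wdz_eq_deriv, wdz_conj, hf.deriv.differentiableAt.wdzbar_eq_zero,
    hf.differentiableAt.wdz_sq_norm]
  have hpos : (1 : ℂ) + f z * conj (f z) ≠ 0 := by
    rw [mul_conj']; exact_mod_cast (by positivity : (1 : ℝ) + ‖f z‖ ^ 2 ≠ 0)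
  push_cast
  simp only [map_zero, ← mul_conj']
  field_simp
  ring

end LogPotentials

lemma Real.exp_neg_two_mul_log {x : ℝ} (hx : 0 < x) :
    Real.exp (-(2 * Real.log x)) = (x ^ 2)⁻¹ := by
  rw [Real.exp_neg, mul_comm, ← Real.rpow_def_of_pos hx, Real.rpow_two]

theorem gauss_mainardi_codazzi_of_weierstrass_data
    (Ω : Set ℂ) (hΩ : IsOpen Ω)
    (η ψ : ℂ → ℂ) (hη : DifferentiableOn ℂ η Ω) (hψ : DifferentiableOn ℂ ψ Ω)
    (hη0 : ∀ z ∈ Ω, η z ≠ 0)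
    (u : ℂ → ℝ)
    (hu : ∀ z ∈ Ω, u z = 2 * Real.log (‖η z‖ ^ 2 * (1 + ‖ψ z‖ ^ 2)))
    (Q : ℂ → ℂ) (hQ : ∀ z ∈ Ω, Q z = -(η z) ^ 2 * deriv ψ z) :
    (∀ z ∈ Ω, wdz (wdzbar (fun w => (u w : ℂ))) z
        - 2 * (‖Q z‖ : ℂ) ^ 2 * Complex.exp (-(u z : ℂ)) = 0) ∧
    DifferentiableOn ℂ Q Ω := by
  refine ⟨fun z hz => ?_,
    ((hη.pow 2).neg.mul (hψ.analyticOnNhd hΩ).deriv.differentiableOn).congr hQ⟩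
  have hηz : AnalyticAt ℂ η z := hη.analyticAt (hΩ.mem_nhds hz)
  have hψz : AnalyticAt ℂ ψ z := hψ.analyticAt (hΩ.mem_nhds hz)
  have hsplit : (fun w => (u w : ℂ)) =ᶠ[𝓝 z]
      fun w => 2 * (Real.log (‖η w‖ ^ 2) : ℂ) + 2 * (Real.log (1 + ‖ψ w‖ ^ 2) : ℂ) := by
    filter_upwards [hΩ.mem_nhds hz] with w hw
    rw [hu w hw, Real.log_mul (by simpa using hη0 w hw) (by positivity)]
    push_cast
    ring
  have hηpos : 0 < ‖η z‖ := norm_pos_iff.mpr (hη0 z hz)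
  have hη2 : ContDiffAt ℝ 2 (fun w => (Real.log (‖η w‖ ^ 2) : ℂ)) z :=
    ((hηz.contDiffAt.restrict_scalars ℝ).norm_sq ℝ).ofReal_log (by positivity)
  have hψ2 : ContDiffAt ℝ 2 (fun w => (Real.log (1 + ‖ψ w‖ ^ 2) : ℂ)) z :=
    (contDiffAt_const.add ((hψz.contDiffAt.restrict_scalars ℝ).norm_sq ℝ)).ofReal_log
      (by positivity)
  rw [hsplit.wdzbar.wdz.eq_of_nhds,
    wdz_wdzbar_add (contDiffAt_const.mul hη2) (contDiffAt_const.mul hψ2),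
    wdz_wdzbar_const_mul _ hη2, wdz_wdzbar_const_mul _ hψ2, hηz.wdz_wdzbar_log_sq_norm (hη0 z hz),
    hψz.wdz_wdzbar_log_one_add_sq_norm, hu z hz, hQ z hz, ← ofReal_neg, ← ofReal_exp,
    Real.exp_neg_two_mul_log (by positivity), norm_mul, norm_neg, norm_pow]
  have hη0' : (‖η z‖ : ℂ) ≠ 0 := ofReal_ne_zero.mpr hηpos.ne'
  have hψ1 : (1 : ℂ) + ‖ψ z‖ ^ 2 ≠ 0 := by exact_mod_cast (by positivity : (1 : ℝ) + ‖ψ z‖ ^ 2 ≠ 0)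
  push_cast
  field_simp
  ring

end
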